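/- arXiv:1103.1776 — 3 statements merged into one kernel-verified Lean document; each statement's English description precedes it below -/
import Mathlib

section
/- Let H be a complete subset of the standard n-simplex Δ and f : Δ → Δ uniformly continuous. Suppose that for all sequences (x_n), (y_n) in H, if |f(x_n) − x_n| → 0 and |f(y_n) − y_n| → 0 then |x_n − y_n| → 0. If there exists a sequence (z_n) in H with |f(z_n) − z_n| → 0, then f has a fixed point in H. -/
open Filter Topology

/-! The sequential condition, applied to `z ∘ φ` and `z ∘ ψ` for any `φ, ψ → ∞`, makes `z` a Cauchy sequence;
by completeness it converges to some `w ∈ H`, and continuity of `f` at `w` turns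
`dist (f (z k)) (z k) → 0` into `dist (f w) w = 0`. -/

theorem cauchySeq_of_forall_tendsto_dist_comp {α : Type*} [PseudoMetricSpace α] {z : ℕ → α}
    (h : ∀ φ ψ : ℕ → ℕ, Tendsto φ atTop atTop → Tendsto ψ atTop atTop →
      Tendsto (fun k => dist (z (φ k)) (z (ψ k))) atTop (𝓝 0)) :
    CauchySeq z := by
  rw [cauchySeq_iff_tendsto_dist_atTop_0, tendsto_iff_seq_tendsto]
  intro p hp
  rw [← prod_atTop_atTop_eq, tendsto_prod_iff'] at hp
  exact h _ _ hp.1 hp.2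

theorem ContinuousWithinAt.eq_of_tendsto_dist_apply_self {α : Type*} [MetricSpace α]
    {f : α → α} {s : Set α} {w : α} {ι : Type*} {l : Filter ι} [l.NeBot] {z : ι → α}
    (hf : ContinuousWithinAt f s w) (hzs : ∀ᶠ k in l, z k ∈ s) (hzw : Tendsto z l (𝓝 w))
    (hfz : Tendsto (fun k => dist (f (z k)) (z k)) l (𝓝 0)) :
    f w = w := by
  have hzw' : Tendsto z l (𝓝[s] w) := tendsto_nhdsWithin_iff.mpr ⟨hzw, hzs⟩
  have hdist : Tendsto (fun k => dist (f (z k)) (z k)) l (𝓝 (dist (f w) w)) :=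
    (hf.tendsto.comp hzw').dist hzw
  exact dist_eq_zero.mp (tendsto_nhds_unique hdist hfz)

theorem stmt_3_general (n : ℕ)
    (Δ H : Set (EuclideanSpace ℝ (Fin (n + 1))))
    (hH : H ⊆ Δ) (hHc : IsComplete H)
    (f : EuclideanSpace ℝ (Fin (n + 1)) → EuclideanSpace ℝ (Fin (n + 1)))
    (hf : UniformContinuousOn f Δ)
    (hslnc : ∀ x y : ℕ → EuclideanSpace ℝ (Fin (n + 1)),
      (∀ k, x k ∈ H) → (∀ k, y k ∈ H) →
      Tendsto (fun k => dist (f (x k)) (x k)) atTop (𝓝 0) →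
      Tendsto (fun k => dist (f (y k)) (y k)) atTop (𝓝 0) →
      Tendsto (fun k => dist (x k) (y k)) atTop (𝓝 0))
    (z : ℕ → EuclideanSpace ℝ (Fin (n + 1))) (hz : ∀ k, z k ∈ H)
    (hz0 : Tendsto (fun k => dist (f (z k)) (z k)) atTop (𝓝 0)) :
    ∃ w ∈ H, f w = w := by
  have hcauchy : CauchySeq z := cauchySeq_of_forall_tendsto_dist_comp fun φ ψ hφ hψ =>
    hslnc _ _ (fun _ => hz _) (fun _ => hz _) (hz0.comp hφ) (hz0.comp hψ)
  obtain ⟨w, hwH, hzw⟩ := cauchySeq_tendsto_of_isComplete hHc hz hcauchy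
  exact ⟨w, hwH, (hf.continuousOn w (hH hwH)).eq_of_tendsto_dist_apply_self
    (Eventually.of_forall fun k => hH (hz k)) hzw hz0⟩

/-- If `f` is uniformly continuous on the standard n-simplex, `H ⊆ Δ` is complete,
`f` is sequentially locally non-constant on `H`, and some sequence in `H` has
approximate-fixed-point distances tending to 0, then `f` has a fixed point in `H`. -/
theorem stmt_3 (n : ℕ)
    (Δ H : Set (EuclideanSpace ℝ (Fin (n + 1))))
    (hΔ : Δ = {x | (∀ i, 0 ≤ x i) ∧ ∑ i, x i = 1})
    (hH : H ⊆ Δ) (hHc : IsComplete H)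
    (f : EuclideanSpace ℝ (Fin (n + 1)) → EuclideanSpace ℝ (Fin (n + 1)))
    (hmaps : Set.MapsTo f Δ Δ)
    (hf : UniformContinuousOn f Δ)
    (hslnc : ∀ x y : ℕ → EuclideanSpace ℝ (Fin (n + 1)),
      (∀ k, x k ∈ H) → (∀ k, y k ∈ H) →
      Tendsto (fun k => dist (f (x k)) (x k)) atTop (𝓝 0) →
      Tendsto (fun k => dist (f (y k)) (y k)) atTop (𝓝 0) →
      Tendsto (fun k => dist (x k) (y k)) atTop (𝓝 0))
    (z : ℕ → EuclideanSpace ℝ (Fin (n + 1))) (hz : ∀ k, z k ∈ H)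
    (hz0 : Tendsto (fun k => dist (f (z k)) (z k)) atTop (𝓝 0)) :
    ∃ w ∈ H, f w = w :=
  stmt_3_general n Δ H hH hHc f hf hslnc z hz hz0
end

section
/- Let f : Δ → Δ be a uniformly continuous, sequentially locally non-constant function from the n-dimensional simplex into itself which has approximate fixed points (for every ε > 0 there is x with |x − f(x)| < ε). Then f has a fixed point. -/
open Filter Topology

/-! The continuous function `x ↦ dist x (f x)` attains its minimum on the compact simplex, and
approximate fixed points force that minimum to be `0`. -/

theorem isCompact_euclideanSpace_stdSimplex (ι : Type*) [Fintype ι] :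
    IsCompact {x : EuclideanSpace ℝ ι | (∀ i, 0 ≤ x i) ∧ ∑ i, x i = 1} :=
  (PiLp.homeomorph 2 fun _ : ι => ℝ).isCompact_preimage.2 (isCompact_stdSimplex ℝ ι)

theorem IsCompact.exists_fixedPoint_of_forall_exists_dist_lt {X : Type*} [MetricSpace X]
    {K : Set X} {f : X → X} (hK : IsCompact K) (hf : ContinuousOn f K)
    (happrox : ∀ ε > (0 : ℝ), ∃ x ∈ K, dist x (f x) < ε) : ∃ z ∈ K, f z = z := by
  obtain ⟨x₀, hx₀, -⟩ := happrox 1 one_pos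
  obtain ⟨z, hz, hmin⟩ :=
    hK.exists_isMinOn ⟨x₀, hx₀⟩ (continuous_dist.comp_continuousOn (continuousOn_id.prodMk hf))
  refine ⟨z, hz, ?_⟩
  by_contra hne
  obtain ⟨x, hx, hlt⟩ := happrox _ (dist_pos.2 (Ne.symm hne))
  exact (hmin hx).not_gt hlt

theorem stmt_4_general (n : ℕ)
    (Δ : Set (EuclideanSpace ℝ (Fin (n + 1))))
    (hΔ : Δ = {x | (∀ i, 0 ≤ x i) ∧ ∑ i, x i = 1})
    (f : EuclideanSpace ℝ (Fin (n + 1)) → EuclideanSpace ℝ (Fin (n + 1)))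
    (hf : UniformContinuousOn f Δ)
    (happrox : ∀ ε > (0 : ℝ), ∃ x ∈ Δ, dist x (f x) < ε) :
    ∃ z ∈ Δ, f z = z := by
  subst hΔ
  exact (isCompact_euclideanSpace_stdSimplex _).exists_fixedPoint_of_forall_exists_dist_lt
    hf.continuousOn happrox

/-- Brouwer's fixed point theorem for sequentially locally non-constant functions:
a uniformly continuous self-map of the standard n-simplex which is sequentially
locally non-constant and has approximate fixed points has a fixed point. -/
theorem stmt_4 (n : ℕ)
    (Δ : Set (EuclideanSpace ℝ (Fin (n + 1))))
    (hΔ : Δ = {x | (∀ i, 0 ≤ x i) ∧ ∑ i, x i = 1})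
    (f : EuclideanSpace ℝ (Fin (n + 1)) → EuclideanSpace ℝ (Fin (n + 1)))
    (hmaps : Set.MapsTo f Δ Δ)
    (hf : UniformContinuousOn f Δ)
    (hslnc : ∃ εbar > (0 : ℝ), ∀ ε, 0 < ε → ε ≤ εbar →
      ∃ (m : ℕ) (H : Fin m → Set (EuclideanSpace ℝ (Fin (n + 1)))),
        (∀ i, TotallyBounded (H i)) ∧ (∀ i, Metric.diam (H i) ≤ ε) ∧
        (⋃ i, H i) = Δ ∧
        ∀ i, ∀ x y : ℕ → EuclideanSpace ℝ (Fin (n + 1)),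
          (∀ k, x k ∈ H i) → (∀ k, y k ∈ H i) →
          Tendsto (fun k => dist (f (x k)) (x k)) atTop (𝓝 0) →
          Tendsto (fun k => dist (f (y k)) (y k)) atTop (𝓝 0) →
          Tendsto (fun k => dist (x k) (y k)) atTop (𝓝 0))
    (happrox : ∀ ε > (0 : ℝ), ∃ x ∈ Δ, dist x (f x) < ε) :
    ∃ z ∈ Δ, f z = z :=
  stmt_4_general n Δ hΔ f hf happrox
end

section
/- Let δ be a fully labeled n-simplex with vertices x^0, …, x^n where x^i is labeled i, let τ > 0, and let f be the affine extension of f(x^i)_j = x^i_j − τ if j = i, x^i_j + τ/n otherwise. If (z_m) and (z'_m) are sequences in δ with |f(z_m) − z_m| → 0 and |f(z'_m) − z'_m| → 0, writing z_m = Σ λ(m)_i x^i and z'_m = Σ λ'(m)_i x^i in barycentric coordinates, then λ(m)_i → 1/(n+1) and λ'(m)_i → 1/(n+1) for all i, and hence |z_m − z'_m| → 0. -/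
/-!
On the simplex, `f(z) - z = ∑ λᵢ (f(xⁱ) - xⁱ)`, and since `∑ λᵢ = 1` its `j`-th coordinate is
`τ/n - λⱼ (τ + τ/n)`. A vanishing displacement therefore forces every barycentric coordinate to
`(τ/n) / (τ + τ/n) = 1/(n+1)`, so both sequences converge to the barycenter of `δ`.
-/

open Filter Topology

lemma sum_smul_apply_sub_sum_smul_apply {ι : Type*} [Fintype ι] [DecidableEq ι] {a b : ℝ}
    {x F : ι → EuclideanSpace ℝ ι}
    (hF : ∀ k, F k = fun j => if j = k then x k j - a else x k j + b)
    {lam : ι → ℝ} (hlam : ∑ i, lam i = 1) (j : ι) :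
    (∑ i, lam i • F i) j - (∑ i, lam i • x i) j = b - lam j * (a + b) := by
  have hterm : ∀ i,
      lam i * F i j - lam i * x i j = lam i * b - if j = i then lam i * (a + b) else 0 := by
    intro i
    simp only [hF]
    split_ifs <;> ring
  simp only [WithLp.ofLp_sum, WithLp.ofLp_smul, Finset.sum_apply, Pi.smul_apply, smul_eq_mul]
  rw [← Finset.sum_sub_distrib, Finset.sum_congr rfl fun i _ => hterm i, Finset.sum_sub_distrib,
    ← Finset.sum_mul, hlam, Finset.sum_ite_eq, if_pos (Finset.mem_univ j)]
  ring

lemma tendsto_of_tendsto_sub_mul {α : Type*} {l : Filter α} {u : α → ℝ} {b c : ℝ} (hc : c ≠ 0)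
    (h : Tendsto (fun m => b - u m * c) l (𝓝 0)) : Tendsto u l (𝓝 (b / c)) := by
  have hlim := (tendsto_const_nhds (x := b)).sub h |>.div_const c
  rw [sub_zero] at hlim
  refine hlim.congr fun m => ?_
  field_simp
  ring

lemma tendsto_barycentric_coord_of_tendsto_dist {n : ℕ} (hn : 0 < n)
    {x F : Fin (n + 1) → EuclideanSpace ℝ (Fin (n + 1))} {τ : ℝ} (hτ : 0 < τ)
    (hF : ∀ k, F k = fun j => if j = k then x k j - τ else x k j + τ / n)
    {lam : ℕ → Fin (n + 1) → ℝ} (hlam1 : ∀ m, ∑ i, lam m i = 1)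
    (h : Tendsto (fun m => dist (∑ i, lam m i • F i) (∑ i, lam m i • x i)) atTop (𝓝 0))
    (j : Fin (n + 1)) :
    Tendsto (fun m => lam m j) atTop (𝓝 (1 / (n + 1 : ℝ))) := by
  have hdisp : Tendsto (fun m => τ / n - lam m j * (τ + τ / n)) atTop (𝓝 0) := by
    refine squeeze_zero_norm (fun m => ?_) h
    rw [← sum_smul_apply_sub_sum_smul_apply hF (hlam1 m) j, ← dist_eq_norm]
    exact PiLp.dist_apply_le _ _ j
  have hn' : (0 : ℝ) < n := Nat.cast_pos.mpr hn
  have hlim : τ / n / (τ + τ / n) = 1 / (n + 1 : ℝ) := by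
    field_simp
  rw [← hlim]
  exact tendsto_of_tendsto_sub_mul (by positivity) hdisp

theorem stmt_8_general (n : ℕ) (hn : 0 < n)
    (x : Fin (n + 1) → EuclideanSpace ℝ (Fin (n + 1)))
    (τ : ℝ) (hτ : 0 < τ)
    (F : Fin (n + 1) → EuclideanSpace ℝ (Fin (n + 1)))
    (hF : ∀ k, F k = fun j => if j = k then x k j - τ else x k j + τ / n)
    (lam lam' : ℕ → Fin (n + 1) → ℝ)
    (hlam1 : ∀ m, ∑ i, lam m i = 1)
    (hlam1' : ∀ m, ∑ i, lam' m i = 1)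
    (z z' : ℕ → EuclideanSpace ℝ (Fin (n + 1)))
    (hz : ∀ m, z m = ∑ i, lam m i • x i)
    (hz' : ∀ m, z' m = ∑ i, lam' m i • x i)
    (h1 : Tendsto (fun m => dist (∑ i, lam m i • F i) (z m)) atTop (𝓝 0))
    (h2 : Tendsto (fun m => dist (∑ i, lam' m i • F i) (z' m)) atTop (𝓝 0)) :
    (∀ i, Tendsto (fun m => lam m i) atTop (𝓝 (1 / (n + 1 : ℝ)))) ∧
    (∀ i, Tendsto (fun m => lam' m i) atTop (𝓝 (1 / (n + 1 : ℝ)))) ∧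
    Tendsto (fun m => dist (z m) (z' m)) atTop (𝓝 0) := by
  have hlam :=
    tendsto_barycentric_coord_of_tendsto_dist hn hτ hF hlam1 (by simpa only [hz] using h1)
  have hlam' :=
    tendsto_barycentric_coord_of_tendsto_dist hn hτ hF hlam1' (by simpa only [hz'] using h2)
  refine ⟨hlam, hlam', ?_⟩
  have to_barycenter : ∀ {μ : ℕ → Fin (n + 1) → ℝ},
      (∀ i, Tendsto (fun m => μ m i) atTop (𝓝 (1 / (n + 1 : ℝ)))) →
      Tendsto (fun m => ∑ i, μ m i • x i) atTop (𝓝 (∑ i, (1 / (n + 1 : ℝ)) • x i)) :=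
    fun hμ => tendsto_finsetSum _ fun i _ => (hμ i).smul_const (x i)
  simpa only [← hz, ← hz', dist_self] using (to_barycenter hlam).dist (to_barycenter hlam')

/-- In a fully labeled simplex (vertex `x i` labeled `i`), any two sequences of
approximate fixed points of the affine extension of the labeling-induced map
have barycentric coordinates converging to `1/(n+1)`, hence their mutual
distances tend to 0. -/
theorem stmt_8 (n : ℕ) (hn : 0 < n)
    (x : Fin (n + 1) → EuclideanSpace ℝ (Fin (n + 1)))
    (hind : AffineIndependent ℝ x)
    (τ : ℝ) (hτ : 0 < τ)
    (F : Fin (n + 1) → EuclideanSpace ℝ (Fin (n + 1)))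
    (hF : ∀ k, F k = fun j => if j = k then x k j - τ else x k j + τ / n)
    (lam lam' : ℕ → Fin (n + 1) → ℝ)
    (hlam : ∀ m i, 0 ≤ lam m i) (hlam1 : ∀ m, ∑ i, lam m i = 1)
    (hlam' : ∀ m i, 0 ≤ lam' m i) (hlam1' : ∀ m, ∑ i, lam' m i = 1)
    (z z' : ℕ → EuclideanSpace ℝ (Fin (n + 1)))
    (hz : ∀ m, z m = ∑ i, lam m i • x i)
    (hz' : ∀ m, z' m = ∑ i, lam' m i • x i)
    (h1 : Tendsto (fun m => dist (∑ i, lam m i • F i) (z m)) atTop (𝓝 0))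
    (h2 : Tendsto (fun m => dist (∑ i, lam' m i • F i) (z' m)) atTop (𝓝 0)) :
    (∀ i, Tendsto (fun m => lam m i) atTop (𝓝 (1 / (n + 1 : ℝ)))) ∧
    (∀ i, Tendsto (fun m => lam' m i) atTop (𝓝 (1 / (n + 1 : ℝ)))) ∧
    Tendsto (fun m => dist (z m) (z' m)) atTop (𝓝 0) :=
  stmt_8_general n hn x τ hτ F hF lam lam' hlam1 hlam1' z z' hz hz' h1 h2
end
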